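/- arXiv:1609.06575 — 3 statements merged into one kernel-verified Lean document; each statement's English description precedes it below -/
import Mathlib

section
/- Let X, Y be independent, identically distributed real random variables whose common law is absolutely continuous with respect to Lebesgue measure and symmetric about 0 (i.e., the law of −X equals the law of X), and let k ∈ [0,1]. Define C_k = 1 if X + kY ≥ 0 and C_k = 0 otherwise. Then MI(C_k, X²) = 0; equivalently, the joint law of (X², C_k) equals the product of the law of X² and the law of C_k. -/
/-!
The law `μ ⊗ μ` of `W = (X, Y)` is invariant under `w ↦ -w`, since `μ` is symmetric. This map
fixes the even function `x²` and changes the sign of the odd function `x + ky`, so for every Borel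
`S` the events `{X² ∈ S, X + kY ≥ 0}` and `{X² ∈ S, X + kY ≤ 0}` have the same probability. As `μ`
has no atoms, `X + kY ≠ 0` almost surely, so each of them carries half of `{X² ∈ S}`. Hence `X²`
is independent of `C_k`, the joint law is the product law, and the divergence vanishes.
-/

open MeasureTheory ProbabilityTheory Real
open scoped Classical

/-- Kullback–Leibler divergence of `μ` from `ν` (with values in `EReal`),
defined as `+∞` unless `μ ≪ ν` and the log-likelihood ratio is `μ`-integrable. -/
noncomputable def klDiv {α : Type*} [MeasurableSpace α] (μ ν : Measure α) : EReal :=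
  if μ ≪ ν ∧ Integrable (llr μ ν) μ then ((∫ x, llr μ ν x ∂μ : ℝ) : EReal) else ⊤

/-- The uniform probability measure on the interval `[-δ, δ]`. -/
noncomputable def uniformIcc (δ : ℝ) : Measure ℝ :=
  (ENNReal.ofReal (2 * δ))⁻¹ • volume.restrict (Set.Icc (-δ) δ)

lemma klDiv_self {α : Type*} [MeasurableSpace α] (μ : Measure α) [SigmaFinite μ] :
    klDiv μ μ = 0 := by
  have hint : Integrable (llr μ μ) μ := (integrable_congr (llr_self μ)).2 (integrable_zero _ _ _)
  rw [klDiv, if_pos ⟨Measure.AbsolutelyContinuous.refl μ, hint⟩, integral_congr_ae (llr_self μ)]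
  simp

lemma MeasureTheory.Measure.ae_prod_fst_ne {α β : Type*} [MeasurableSpace α] [MeasurableEq α]
    [MeasurableSpace β] (μ : Measure α) [SFinite μ] [NullSingletonClass μ] (ν : Measure β)
    [SFinite ν] {f : β → α} (hf : Measurable f) :
    ∀ᵐ p ∂μ.prod ν, p.1 ≠ f p.2 := by
  have hgraph : MeasurableSet {p : α × β | p.1 = f p.2} :=
    measurableSet_eq_fun measurable_fst (hf.comp measurable_snd)
  simp only [ae_iff, ne_eq, not_not]
  rw [Measure.prod_apply_symm hgraph]
  simp [Set.preimage]

lemma indepFun_indicator_of_measure_inter_eq_mul {Ω α M : Type*} [MeasurableSpace Ω]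
    [MeasurableSpace α] [Zero M] [MeasurableSpace M] {P : Measure Ω} [IsProbabilityMeasure P]
    (c : M) {V : Ω → α} (hV : Measurable V) {A : Set Ω} (hA : MeasurableSet A)
    (h : ∀ S, MeasurableSet S → P (V ⁻¹' S ∩ A) = P (V ⁻¹' S) * P A) :
    IndepFun V (A.indicator fun _ => c) P := by
  have hA_gen : MeasurableSet[MeasurableSpace.generateFrom {A}] A :=
    MeasurableSpace.measurableSet_generateFrom (Set.mem_singleton A)
  refine (Indep.indicator_indepFun c hA_gen ?_).symm
  rw [← @MeasurableSpace.generateFrom_measurableSet _ (MeasurableSpace.comap V _)]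
  refine IndepSets.indep' (by simpa using hA) (fun s hs => hV.comap_le s hs)
    (IsPiSystem.singleton A) (@MeasurableSpace.isPiSystem_measurableSet _ (.comap V _)) ?_
  rw [IndepSets_iff]
  rintro s - rfl ⟨S, hS, rfl⟩
  rw [Set.inter_comm, h S hS, mul_comm]

section SymmetricLaw

variable {Ω E α : Type*} [MeasurableSpace Ω] [MeasurableSpace E] [Neg E] [MeasurableNeg E]
  [MeasurableSpace α] {P : Measure Ω} {W : Ω → E} {f : E → α} {g : E → ℝ}

lemma measure_comp_preimage_inter_nonneg_eq_half (hW : Measurable W)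
    (hW_symm : P.map (-W) = P.map W) (hf : Measurable f) (hf_even : ∀ x, f (-x) = f x)
    (hg : Measurable g) (hg_odd : ∀ x, g (-x) = -g x) (hg_ne : ∀ᵐ ω ∂P, g (W ω) ≠ 0)
    {S : Set α} (hS : MeasurableSet S) :
    P ((f ∘ W) ⁻¹' S ∩ {ω | 0 ≤ g (W ω)}) = P ((f ∘ W) ⁻¹' S) / 2 := by
  set A := (f ∘ W) ⁻¹' S
  have hpos : MeasurableSet {ω | 0 ≤ g (W ω)} := measurableSet_le measurable_const (hg.comp hW)
  have hflip : P (A ∩ {ω | 0 ≤ g (W ω)}) = P (A ∩ {ω | g (W ω) ≤ 0}) := by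
    have hB : MeasurableSet (f ⁻¹' S ∩ {x | 0 ≤ g x}) :=
      (hf hS).inter (measurableSet_le measurable_const hg)
    calc P (A ∩ {ω | 0 ≤ g (W ω)}) = P.map W (f ⁻¹' S ∩ {x | 0 ≤ g x}) := by
          rw [Measure.map_apply hW hB]; rfl
      _ = P.map (-W) (f ⁻¹' S ∩ {x | 0 ≤ g x}) := by rw [hW_symm]
      _ = P (A ∩ {ω | g (W ω) ≤ 0}) := by
          rw [Measure.map_apply hW.neg hB]
          congr 1
          ext ω
          simp [A, hf_even, hg_odd]
  have hae : P (A ∩ {ω | g (W ω) ≤ 0}) = P (A \ {ω | 0 ≤ g (W ω)}) := by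
    refine measure_congr ?_
    filter_upwards [hg_ne] with ω hω
    change (ω ∈ A ∧ g (W ω) ≤ 0) = (ω ∈ A ∧ ¬0 ≤ g (W ω))
    rw [not_le, hω.le_iff_lt]
  rw [ENNReal.eq_div_iff two_ne_zero ENNReal.ofNat_ne_top, two_mul]
  nth_rewrite 2 [hflip]
  rw [hae, measure_inter_add_sdiff A hpos]

theorem indepFun_comp_indicator_nonneg_of_map_neg_eq [IsProbabilityMeasure P] {M : Type*}
    [Zero M] [MeasurableSpace M] (c : M) (hW : Measurable W) (hW_symm : P.map (-W) = P.map W)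
    (hf : Measurable f) (hf_even : ∀ x, f (-x) = f x) (hg : Measurable g)
    (hg_odd : ∀ x, g (-x) = -g x) (hg_ne : ∀ᵐ ω ∂P, g (W ω) ≠ 0) :
    IndepFun (f ∘ W) ({ω | 0 ≤ g (W ω)}.indicator fun _ => c) P := by
  have hhalf (S : Set α) (hS : MeasurableSet S) :=
    measure_comp_preimage_inter_nonneg_eq_half hW hW_symm hf hf_even hg hg_odd hg_ne hS
  have hpos : P {ω | 0 ≤ g (W ω)} = 2⁻¹ := by
    simpa [ENNReal.div_eq_inv_mul] using hhalf _ MeasurableSet.univ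
  refine indepFun_indicator_of_measure_inter_eq_mul c (hf.comp hW)
    (measurableSet_le measurable_const (hg.comp hW)) fun S hS => ?_
  rw [hhalf S hS, hpos, ENNReal.div_eq_inv_mul, mul_comm]

end SymmetricLaw

lemma map_neg_prodMk_eq_of_indepFun {Ω F G : Type*} [MeasurableSpace Ω] [MeasurableSpace F]
    [Neg F] [MeasurableNeg F] [MeasurableSpace G] [Neg G] [MeasurableNeg G] {P : Measure Ω}
    [IsFiniteMeasure P] {X : Ω → F} {Y : Ω → G} (hX : Measurable X) (hY : Measurable Y)
    (hXY : IndepFun X Y P) (hX_symm : (P.map X).map (fun x => -x) = P.map X)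
    (hY_symm : (P.map Y).map (fun y => -y) = P.map Y) :
    P.map (-fun ω => (X ω, Y ω)) = P.map fun ω => (X ω, Y ω) := by
  rw [show (-fun ω => (X ω, Y ω)) = Prod.map (fun x => -x) (fun y => -y) ∘ fun ω => (X ω, Y ω)
    from rfl, ← Measure.map_map (measurable_neg.prodMap measurable_neg) (hX.prodMk hY),
    (indepFun_iff_map_prod_eq_prod_map_map hX.aemeasurable hY.aemeasurable).1 hXY,
    ← Measure.map_prod_map _ _ measurable_neg measurable_neg, hX_symm, hY_symm]

theorem stmt_1_general {Ω : Type*} [MeasurableSpace Ω] (P : Measure Ω) [IsProbabilityMeasure P]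
    (k : ℝ)
    (X Y : Ω → ℝ) (hX : Measurable X) (hY : Measurable Y)
    (hindep : IndepFun X Y P)
    (hid : P.map X = P.map Y)
    (hac : P.map X ≪ volume)
    (hsym : (P.map X).map (fun x => -x) = P.map X)
    (C : Ω → ℕ) (hC : C = fun ω => if 0 ≤ X ω + k * Y ω then 1 else 0) :
    klDiv (P.map (fun ω => ((X ω) ^ 2, C ω)))
        ((P.map (fun ω => (X ω) ^ 2)).prod (P.map C)) = 0 ∧
      P.map (fun ω => ((X ω) ^ 2, C ω))
        = (P.map (fun ω => (X ω) ^ 2)).prod (P.map C) := by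
  have hW : Measurable fun ω => (X ω, Y ω) := hX.prodMk hY
  have hlaw : P.map (fun ω => (X ω, Y ω)) = (P.map X).prod (P.map X) := by
    rw [(indepFun_iff_map_prod_eq_prod_map_map hX.aemeasurable hY.aemeasurable).1 hindep, hid]
  have : NullSingletonClass (P.map X) := ⟨fun x => hac Real.volume_singleton⟩
  have hne : ∀ᵐ ω ∂P, X ω + k * Y ω ≠ 0 := by
    have hgraph := Measure.ae_prod_fst_ne (P.map X) (P.map X) (f := fun y => -(k * y))
      (by fun_prop)
    rw [← hlaw] at hgraph
    filter_upwards [ae_of_ae_map hW.aemeasurable hgraph] with ω hω h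
    exact hω (by linarith)
  have hC_ind : C = {ω | 0 ≤ X ω + k * Y ω}.indicator fun _ => 1 := by
    rw [hC]; ext ω; simp [Set.indicator_apply]
  have hXC : IndepFun (fun ω => X ω ^ 2) C P := by
    rw [hC_ind]
    exact indepFun_comp_indicator_nonneg_of_map_neg_eq (f := fun p : ℝ × ℝ => p.1 ^ 2)
      (g := fun p => p.1 + k * p.2) 1 hW
      (map_neg_prodMk_eq_of_indepFun hX hY hindep hsym (hid ▸ hsym)) (by fun_prop)
      (fun p => by simp) (by fun_prop) (fun p => by simp; ring) hne
  have hCm : Measurable C :=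
    hC_ind ▸ measurable_const.indicator (measurableSet_le measurable_const (by fun_prop))
  have hmap := (indepFun_iff_map_prod_eq_prod_map_map (hX.pow_const 2).aemeasurable
    hCm.aemeasurable).1 hXC
  exact ⟨hmap ▸ klDiv_self _, hmap⟩

theorem stmt_1 {Ω : Type*} [MeasurableSpace Ω] (P : Measure Ω) [IsProbabilityMeasure P]
    (k : ℝ) (hk : k ∈ Set.Icc (0 : ℝ) 1)
    (X Y : Ω → ℝ) (hX : Measurable X) (hY : Measurable Y)
    (hindep : IndepFun X Y P)
    (hid : P.map X = P.map Y)
    (hac : P.map X ≪ volume)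
    (hsym : (P.map X).map (fun x => -x) = P.map X)
    (C : Ω → ℕ) (hC : C = fun ω => if 0 ≤ X ω + k * Y ω then 1 else 0) :
    klDiv (P.map (fun ω => ((X ω) ^ 2, C ω)))
        ((P.map (fun ω => (X ω) ^ 2)).prod (P.map C)) = 0 ∧
      P.map (fun ω => ((X ω) ^ 2, C ω))
        = (P.map (fun ω => (X ω) ^ 2)).prod (P.map C) :=
  stmt_1_general P k X Y hX hY hindep hid hac hsym C hC
end

section
/- Let X, Y be independent random variables, each uniformly distributed on [−1/2, 1/2], let k ∈ (0,1), and define C_k = 1 if X + kY ≥ 0 and C_k = 0 otherwise. Then MI(C_k, Y) = [ (k² + 1)·log((1 + k)/(1 − k)) + 2k·(log(1 − k²) − 1) ] / (4k). -/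
open MeasureTheory ProbabilityTheory Real
open scoped Classical

/-!
Given `Y = y`, the label `C` is `1` exactly when `X ≥ -k y`, an event of probability `1/2 + k y`.
Averaging over `y`, `C` is a fair coin, so the law of `(C, Y)` has density
`r(c, y) = 1 ± 2 k y` with respect to the product of the marginals, and the mutual information
is `∫ r log r`. Both values of `c` contribute the same integral, which the substitution
`u = 1 + 2 k y` turns into `(2k)⁻¹ ∫_{1-k}^{1+k} u log u du`.
-/

open scoped ENNReal

theorem klDiv_withDensity_ofReal {α : Type*} [MeasurableSpace α] {ν : Measure α}
    [SigmaFinite ν] {f : α → ℝ} (hf : Measurable f) (hf_nonneg : 0 ≤ᵐ[ν] f)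
    (hint : Integrable (fun x => f x * log (f x)) ν) :
    klDiv (ν.withDensity fun x => ENNReal.ofReal (f x)) ν
      = ((∫ x, f x * log (f x) ∂ν : ℝ) : EReal) := by
  set μ := ν.withDensity fun x => ENNReal.ofReal (f x)
  have hac : μ ≪ ν := withDensity_absolutelyContinuous _ _
  have hllr : llr μ ν =ᵐ[μ] fun x => log (f x) := by
    refine hac.ae_le ?_
    filter_upwards [Measure.rnDeriv_withDensity ν hf.ennreal_ofReal, hf_nonneg] with x hx hx0
    rw [llr, show μ.rnDeriv ν x = _ from hx, ENNReal.toReal_ofReal hx0]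
  have hsmul : (fun x => (f x).toNNReal • log (f x)) =ᵐ[ν] fun x => f x * log (f x) := by
    filter_upwards [hf_nonneg] with x hx
    rw [NNReal.smul_def, Real.coe_toNNReal _ hx, smul_eq_mul]
  have hint_llr : Integrable (llr μ ν) μ :=
    (integrable_congr hllr).2 <| (integrable_withDensity_iff_integrable_smul hf.real_toNNReal).2 <|
      (integrable_congr hsmul).2 hint
  rw [klDiv, if_pos ⟨hac, hint_llr⟩, integral_congr_ae hllr]
  exact congrArg _ <| (integral_withDensity_eq_integral_smul hf.real_toNNReal _).trans
    (integral_congr_ae hsmul)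

theorem integral_mul_log_eq {a b : ℝ} (ha : 0 < a) (hb : 0 < b) :
    ∫ x in a..b, x * log x = (b ^ 2 * (2 * log b - 1) - a ^ 2 * (2 * log a - 1)) / 4 := by
  have hpos : ∀ x ∈ Set.uIcc a b, 0 < x := fun x hx => (lt_min ha hb).trans_le hx.1
  have hderiv : ∀ x ∈ Set.uIcc a b,
      HasDerivAt (fun x => x ^ 2 * (2 * log x - 1) / 4) (x * log x) x := by
    intro x hx
    have hx0 := (hpos x hx).ne'
    refine (((hasDerivAt_pow 2 x).mul
      (((hasDerivAt_log hx0).const_mul 2).sub_const 1)).div_const 4).congr_deriv ?_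
    field_simp
    ring
  have hcont : ContinuousOn (fun x => x * log x) (Set.uIcc a b) :=
    continuousOn_id.mul (continuousOn_log.mono fun x hx => (hpos x hx).ne')
  rw [intervalIntegral.integral_eq_sub_of_hasDerivAt hderiv hcont.intervalIntegrable]
  ring

theorem uniformIcc_half : uniformIcc (1 / 2) = volume.restrict (Set.Icc (-(1 / 2)) (1 / 2)) := by
  simp [uniformIcc]

instance : IsProbabilityMeasure (uniformIcc (1 / 2)) :=
  ⟨by rw [uniformIcc_half]; norm_num⟩

theorem ae_mem_Icc_uniformIcc_half :
    ∀ᵐ y ∂uniformIcc (1 / 2), y ∈ Set.Icc (-(1 / 2) : ℝ) (1 / 2) := by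
  rw [uniformIcc_half]
  exact ae_restrict_mem measurableSet_Icc

theorem integral_uniformIcc_half (f : ℝ → ℝ) :
    ∫ y, f y ∂uniformIcc (1 / 2) = ∫ y in -(1 / 2)..1 / 2, f y := by
  rw [uniformIcc_half, intervalIntegral.integral_of_le (by norm_num), integral_Icc_eq_integral_Ioc]

theorem uniformIcc_half_Ici {a : ℝ} (ha : a ∈ Set.Icc (-(1 / 2) : ℝ) (1 / 2)) :
    uniformIcc (1 / 2) (Set.Ici a) = ENNReal.ofReal (1 / 2 - a) := by
  have hinter : Set.Ici a ∩ Set.Icc (-(1 / 2)) (1 / 2) = Set.Icc a (1 / 2) := by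
    ext x
    simp only [Set.mem_inter_iff, Set.mem_Ici, Set.mem_Icc]
    constructor
    · exact fun h => ⟨h.1, h.2.2⟩
    · exact fun h => ⟨h.1, ha.1.trans h.1, h.2⟩
  rw [uniformIcc_half, Measure.restrict_apply measurableSet_Ici, hinter, Real.volume_Icc]

theorem uniformIcc_half_Iio {a : ℝ} (ha : a ∈ Set.Icc (-(1 / 2) : ℝ) (1 / 2)) :
    uniformIcc (1 / 2) (Set.Iio a) = ENNReal.ofReal (1 / 2 + a) := by
  rw [← Set.compl_Ici, prob_compl_eq_one_sub measurableSet_Ici, uniformIcc_half_Ici ha,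
    ← ENNReal.ofReal_one, ← ENNReal.ofReal_sub _ (by linarith [ha.2])]
  ring_nf

theorem lintegral_uniformIcc_half_ite {a : ℝ} (ha : a ∈ Set.Icc (-(1 / 2) : ℝ) (1 / 2))
    (u v : ℝ≥0∞) :
    ∫⁻ x, (if a ≤ x then u else v) ∂uniformIcc (1 / 2)
      = ENNReal.ofReal (1 / 2 - a) * u + ENNReal.ofReal (1 / 2 + a) * v := by
  rw [← lintegral_add_compl _ measurableSet_Ici,
    setLIntegral_congr_fun measurableSet_Ici (fun x (hx : a ≤ x) => if_pos hx),
    setLIntegral_congr_fun measurableSet_Ici.compl (fun x (hx : ¬ a ≤ x) => if_neg hx),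
    setLIntegral_const, setLIntegral_const, Set.compl_Ici, uniformIcc_half_Ici ha,
    uniformIcc_half_Iio ha, mul_comm u, mul_comm v]

noncomputable def bernoulliHalf : Measure ℕ :=
  (2⁻¹ : ℝ≥0∞) • (Measure.dirac 0 + Measure.dirac 1)

instance : IsProbabilityMeasure bernoulliHalf :=
  ⟨by simp [bernoulliHalf, ENNReal.inv_two_add_inv_two]⟩

theorem lintegral_bernoulliHalf (f : ℕ → ℝ≥0∞) :
    ∫⁻ c, f c ∂bernoulliHalf = 2⁻¹ * (f 0 + f 1) := by
  simp [bernoulliHalf, lintegral_add_measure, mul_add]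

theorem integral_bernoulliHalf (f : ℕ → ℝ) :
    ∫ c, f c ∂bernoulliHalf = 2⁻¹ * (f 0 + f 1) := by
  rw [bernoulliHalf, integral_smul_measure, integral_add_measure (integrable_dirac (by simp))
    (integrable_dirac (by simp)), integral_dirac, integral_dirac]
  simp

theorem map_fst_withDensity_prod {α β : Type*} [MeasurableSpace α] [MeasurableSpace β]
    {μ : Measure α} {ν : Measure β} [SFinite μ] [SFinite ν] {f : α × β → ℝ≥0∞}
    (hf : Measurable f) (hf_one : ∀ x, ∫⁻ y, f (x, y) ∂ν = 1) :
    ((μ.prod ν).withDensity f).map Prod.fst = μ := by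
  ext s hs
  rw [Measure.map_apply measurable_fst hs, ← Set.prod_univ, withDensity_apply _ (hs.prod .univ),
    setLIntegral_prod _ hf.aemeasurable]
  simp [hf_one]

noncomputable def classify (k : ℝ) (p : ℝ × ℝ) : ℕ × ℝ :=
  (if 0 ≤ p.1 + k * p.2 then 1 else 0, p.2)

theorem measurable_classify (k : ℝ) : Measurable (classify k) :=
  (Measurable.ite (measurableSet_le measurable_const (by fun_prop)) measurable_const
    measurable_const).prodMk measurable_snd

noncomputable def classDensity (k : ℝ) (p : ℕ × ℝ) : ℝ :=
  if p.1 = 1 then 1 + 2 * k * p.2 else 1 - 2 * k * p.2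

theorem measurable_classDensity (k : ℝ) : Measurable (classDensity k) :=
  Measurable.ite (measurable_fst (measurableSet_singleton 1)) (by fun_prop) (by fun_prop)

theorem mul_mem_Icc_half {k y : ℝ} (hk : |k| ≤ 1) (hy : y ∈ Set.Icc (-(1 / 2) : ℝ) (1 / 2)) :
    k * y ∈ Set.Icc (-(1 / 2) : ℝ) (1 / 2) := by
  have hky : |k * y| ≤ 1 * (1 / 2) := by
    rw [abs_mul]
    exact mul_le_mul hk (abs_le.2 hy) (abs_nonneg _) zero_le_one
  rwa [one_mul, abs_le] at hky

theorem classDensity_mem_Icc {k : ℝ} (hk : |k| ≤ 1) {p : ℕ × ℝ}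
    (hp : p.2 ∈ Set.Icc (-(1 / 2) : ℝ) (1 / 2)) : classDensity k p ∈ Set.Icc 0 2 := by
  obtain ⟨hlo, hhi⟩ := mul_mem_Icc_half hk hp
  unfold classDensity
  split_ifs <;> constructor <;> linarith

theorem lintegral_classDensity {k : ℝ} (hk : |k| ≤ 1) (c : ℕ) :
    ∫⁻ y, ENNReal.ofReal (classDensity k (c, y)) ∂uniformIcc (1 / 2) = 1 := by
  have hbound : ∀ᵐ y ∂uniformIcc (1 / 2), classDensity k (c, y) ∈ Set.Icc 0 2 := by
    filter_upwards [ae_mem_Icc_uniformIcc_half] with y hy using classDensity_mem_Icc hk hy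
  have hint : Integrable (fun y => classDensity k (c, y)) (uniformIcc (1 / 2)) := by
    refine .of_bound
      ((measurable_classDensity k).comp measurable_prodMk_left).aestronglyMeasurable 2 ?_
    filter_upwards [hbound] with y hy
    rw [Real.norm_of_nonneg hy.1]
    exact hy.2
  rw [← ofReal_integral_eq_lintegral_ofReal hint (hbound.mono fun y hy => hy.1),
    integral_uniformIcc_half]
  have hlinear : ∀ a : ℝ, ∫ y in -(1 / 2)..1 / 2, (1 + a * y) = 1 := by
    intro a
    rw [intervalIntegral.integral_add intervalIntegrable_const
      (intervalIntegral.intervalIntegrable_id.const_mul _), intervalIntegral.integral_const_mul,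
      integral_id]
    norm_num
  by_cases hc : c = 1
  · simp only [classDensity, hc, if_true]
    rw [hlinear, ENNReal.ofReal_one]
  · simp only [classDensity, hc, if_false, sub_eq_add_neg, ← neg_mul]
    rw [hlinear, ENNReal.ofReal_one]

theorem map_classify_uniformIcc_half {k : ℝ} (hk : |k| ≤ 1) :
    ((uniformIcc (1 / 2)).prod (uniformIcc (1 / 2))).map (classify k)
      = (bernoulliHalf.prod (uniformIcc (1 / 2))).withDensity
          fun p => ENNReal.ofReal (classDensity k p) := by
  have half_ofReal : ∀ t : ℝ, ENNReal.ofReal (1 / 2 + t) = 2⁻¹ * ENNReal.ofReal (1 + 2 * t) := by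
    intro t
    rw [show 1 / 2 + t = 2⁻¹ * (1 + 2 * t) by ring, ENNReal.ofReal_mul (by norm_num),
      ENNReal.ofReal_inv_of_pos two_pos, ENNReal.ofReal_ofNat]
  have half_ofReal_sub :
      ∀ t : ℝ, ENNReal.ofReal (1 / 2 - t) = 2⁻¹ * ENNReal.ofReal (1 - 2 * t) := by
    intro t
    simpa [sub_eq_add_neg] using half_ofReal (-t)
  refine Measure.ext_of_lintegral _ fun φ hφ => ?_
  rw [lintegral_map hφ (measurable_classify k),
    lintegral_prod_symm (fun p => φ (classify k p))
      (hφ.comp (measurable_classify k)).aemeasurable,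
    lintegral_withDensity_eq_lintegral_mul _ (measurable_classDensity k).ennreal_ofReal hφ,
    lintegral_prod_symm _ (((measurable_classDensity k).ennreal_ofReal).mul hφ).aemeasurable]
  refine lintegral_congr_ae ?_
  filter_upwards [ae_mem_Icc_uniformIcc_half] with y hy
  have hsection : ∀ x, φ (classify k (x, y)) = if -(k * y) ≤ x then φ (1, y) else φ (0, y) := by
    intro x
    simp only [classify, neg_le_iff_add_nonneg]
    split_ifs <;> rfl
  obtain ⟨hlo, hhi⟩ := mul_mem_Icc_half hk hy
  rw [lintegral_congr hsection, lintegral_uniformIcc_half_ite ⟨by linarith, by linarith⟩,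
    lintegral_bernoulliHalf]
  simp only [Pi.mul_apply, classDensity, if_true, zero_ne_one, if_false, sub_neg_eq_add,
    ← sub_eq_add_neg, half_ofReal, half_ofReal_sub]
  rw [mul_assoc 2 k y]
  ring

theorem integrable_classDensity_mul_log {k : ℝ} (hk : |k| ≤ 1) :
    Integrable (fun p => classDensity k p * log (classDensity k p))
      (bernoulliHalf.prod (uniformIcc (1 / 2))) := by
  obtain ⟨M, hM⟩ := (isCompact_Icc (a := (0 : ℝ)) (b := 2)).exists_bound_of_continuousOn
    continuous_negMulLog.continuousOn
  refine .of_bound (((measurable_classDensity k).mul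
    (measurable_classDensity k).log).aestronglyMeasurable) M ?_
  filter_upwards [Measure.quasiMeasurePreserving_snd.ae ae_mem_Icc_uniformIcc_half] with p hp
  simpa [negMulLog_eq_neg] using hM _ (classDensity_mem_Icc hk hp)

theorem integral_one_add_mul_mul_log {c : ℝ} (hc : c ≠ 0) :
    ∫ y in -(1 / 2)..1 / 2, (1 + c * y) * log (1 + c * y)
      = c⁻¹ * ∫ u in 1 - c / 2..1 + c / 2, u * log u := by
  rw [intervalIntegral.integral_comp_add_mul (fun u => u * log u) hc, smul_eq_mul]
  ring_nf

theorem integral_classDensity_mul_log {k : ℝ} (hk0 : k ≠ 0) (hk : |k| < 1) :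
    ∫ p, classDensity k p * log (classDensity k p) ∂(bernoulliHalf.prod (uniformIcc (1 / 2)))
      = ((k ^ 2 + 1) * log ((1 + k) / (1 - k)) + 2 * k * (log (1 - k ^ 2) - 1)) / (4 * k) := by
  obtain ⟨hlo, hhi⟩ := abs_lt.1 hk
  have hplus : 1 + k ≠ 0 := by linarith
  have hminus : 1 - k ≠ 0 := by linarith
  rw [integral_prod _ (integrable_classDensity_mul_log hk.le), integral_bernoulliHalf]
  simp only [classDensity, if_true, zero_ne_one, if_false, integral_uniformIcc_half,
    sub_eq_add_neg (1 : ℝ) (2 * k * _), ← neg_mul]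
  rw [integral_one_add_mul_mul_log (by simpa using hk0),
    integral_one_add_mul_mul_log (by simpa using hk0),
    show 1 - -2 * k / 2 = 1 + k by ring, show 1 + -2 * k / 2 = 1 - k by ring,
    show 1 - 2 * k / 2 = 1 - k by ring, show 1 + 2 * k / 2 = 1 + k by ring,
    intervalIntegral.integral_symm, integral_mul_log_eq (by linarith) (by linarith),
    log_div hplus hminus, show 1 - k ^ 2 = (1 + k) * (1 - k) by ring, log_mul hplus hminus]
  field_simp
  ring

theorem stmt_12 {Ω : Type*} [MeasurableSpace Ω] (P : Measure Ω) [IsProbabilityMeasure P]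
    (k : ℝ) (hk : k ∈ Set.Ioo (0 : ℝ) 1)
    (X Y : Ω → ℝ) (hX : Measurable X) (hY : Measurable Y)
    (hindep : IndepFun X Y P)
    (hXlaw : P.map X = uniformIcc (1 / 2)) (hYlaw : P.map Y = uniformIcc (1 / 2))
    (C : Ω → ℕ) (hC : C = fun ω => if 0 ≤ X ω + k * Y ω then 1 else 0) :
    klDiv (P.map (fun ω => (C ω, Y ω))) ((P.map C).prod (P.map Y))
      = ((((k ^ 2 + 1) * Real.log ((1 + k) / (1 - k))
            + 2 * k * (Real.log (1 - k ^ 2) - 1)) / (4 * k) : ℝ) : EReal) := by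
  have hk_abs : |k| < 1 := abs_lt.2 ⟨by linarith [hk.1], hk.2⟩
  have hXY : P.map (fun ω => (X ω, Y ω)) = (uniformIcc (1 / 2)).prod (uniformIcc (1 / 2)) := by
    rw [(indepFun_iff_map_prod_eq_prod_map_map hX.aemeasurable hY.aemeasurable).mp hindep,
      hXlaw, hYlaw]
  have hpair : (fun ω => (C ω, Y ω)) = classify k ∘ fun ω => (X ω, Y ω) := by
    rw [hC]
    rfl
  have hpair_meas : Measurable fun ω => (C ω, Y ω) := by
    rw [hpair]
    exact (measurable_classify k).comp (hX.prodMk hY)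
  have hCY : P.map (fun ω => (C ω, Y ω)) = (bernoulliHalf.prod (uniformIcc (1 / 2))).withDensity
      fun p => ENNReal.ofReal (classDensity k p) := by
    rw [hpair, ← Measure.map_map (measurable_classify k) (hX.prodMk hY), hXY,
      map_classify_uniformIcc_half hk_abs.le]
  have hPC : P.map C = bernoulliHalf := by
    rw [show C = Prod.fst ∘ fun ω => (C ω, Y ω) from rfl,
      ← Measure.map_map measurable_fst hpair_meas, hCY,
      map_fst_withDensity_prod (measurable_classDensity k).ennreal_ofReal
        (lintegral_classDensity hk_abs.le)]
  have hdensity_nonneg : 0 ≤ᵐ[bernoulliHalf.prod (uniformIcc (1 / 2))] classDensity k := by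
    filter_upwards [Measure.quasiMeasurePreserving_snd.ae ae_mem_Icc_uniformIcc_half] with p hp
    exact (classDensity_mem_Icc hk_abs.le hp).1
  rw [hCY, hPC, hYlaw, klDiv_withDensity_ofReal (measurable_classDensity k) hdensity_nonneg
    (integrable_classDensity_mul_log hk_abs.le), integral_classDensity_mul_log hk.1.ne' hk_abs]
end

section
/- Let X, Y be independent standard normal random variables, let k ∈ [0,1], and define C_k = 1 if X + kY ≥ 0 and C_k = 0 otherwise. Set α = (1 − k)/(1 + k). Then for every t ∈ ℝ, P(X − Y ≤ t and C_k = 1) = ∫_{−∞}^t (1/√2)·φ(s/√2)·Φ(α·s/√2) ds, where φ and Φ denote the density and cumulative distribution function of the standard normal distribution; consequently the conditional density of X − Y given C_k = 1 is the skew-normal density s ↦ 2·(1/√2)·φ(s/√2)·Φ(α·s/√2) with location 0, scale √2 and shape α. -/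
/-!
Disintegrate the law of `(X, Y)` along `S = X - Y`. Completing the square,
`φ(x) φ(x - s)` is the `N(0, 2)` density at `s` times the `N(s/2, 1/2)` density at `x`: given
`S = s`, `X` is `N(s/2, 1/2)`. On `{S = s}` the event `C_k = 1` reads `X ≥ k s / (1 + k)`, whose
conditional probability is `Φ(α s / √2)`; integrating over `s ≤ t` gives the joint
distribution function. Finally `P(C_k = 1) = 1/2` because `X + kY` is a centred Gaussian, so
conditioning on `C_k = 1` doubles the density.
-/

open MeasureTheory ProbabilityTheory Real
open scoped Classical

open scoped ENNReal NNReal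
open Set

theorem withDensity_prod_withDensity_apply_eq_lintegral_sub {G : Type*} [MeasurableSpace G]
    [AddGroup G] [MeasurableAdd₂ G] [MeasurableNeg G] {μ : Measure G} [SFinite μ]
    [μ.IsAddLeftInvariant] [μ.IsNegInvariant] {f g : G → ℝ≥0∞} (hf : Measurable f)
    (hg : Measurable g) {E : Set (G × G)} (hE : MeasurableSet E) :
    ((μ.withDensity f).prod (μ.withDensity g)) E
      = ∫⁻ s, ∫⁻ x in {x | (x, x - s) ∈ E}, f x * g (x - s) ∂μ ∂μ := by
  set F : G × G → ℝ≥0∞ := E.indicator fun z ↦ f z.1 * g z.2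
  have hF : Measurable F := ((hf.comp measurable_fst).mul (hg.comp measurable_snd)).indicator hE
  have hshear : Measurable fun p : G × G ↦ (p.1, p.1 - p.2) :=
    measurable_fst.prodMk (measurable_fst.sub measurable_snd)
  calc ((μ.withDensity f).prod (μ.withDensity g)) E
      = ∫⁻ x, ∫⁻ y, F (x, y) ∂μ ∂μ := by
        rw [prod_withDensity hf hg, withDensity_apply _ hE, ← lintegral_indicator hE,
          lintegral_prod _ hF.aemeasurable]
    _ = ∫⁻ x, ∫⁻ s, F (x, x - s) ∂μ ∂μ :=
        lintegral_congr fun x ↦ (lintegral_sub_left_eq_self (fun y ↦ F (x, y)) x).symm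
    _ = ∫⁻ s, ∫⁻ x, F (x, x - s) ∂μ ∂μ :=
        lintegral_lintegral_swap (hF.comp hshear).aemeasurable
    _ = ∫⁻ s, ∫⁻ x in {x | (x, x - s) ∈ E}, f x * g (x - s) ∂μ ∂μ := by
        refine lintegral_congr fun s ↦ ?_
        rw [← lintegral_indicator (show MeasurableSet {x | (x, x - s) ∈ E} from
          hE.preimage (measurable_id.prodMk (measurable_id.sub_const s)))]
        rfl

theorem map_cond_eq_withDensity {Ω α : Type*} [MeasurableSpace Ω] [MeasurableSpace α]
    {P : Measure Ω} {A : Set Ω} (hA : MeasurableSet A) {Z : Ω → α} (hZ : Measurable Z)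
    {ν : Measure α} {g : α → ℝ≥0∞} (hg : Measurable g)
    (h : ∀ T, MeasurableSet T → P (Z ⁻¹' T ∩ A) = ∫⁻ s in T, g s ∂ν) :
    (cond P A).map Z = ν.withDensity fun s ↦ (P A)⁻¹ * g s := by
  ext T hT
  rw [Measure.map_apply hZ hT, cond_apply hA, inter_comm, h T hT, withDensity_apply _ hT,
    lintegral_const_mul _ hg]

theorem gaussianPDFReal_mul_gaussianPDFReal_sub (v : ℝ≥0) (x s : ℝ) :
    gaussianPDFReal 0 v x * gaussianPDFReal 0 v (x - s)
      = gaussianPDFReal 0 (2 * v) s * gaussianPDFReal (s / 2) (v / 2) x := by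
  rcases eq_or_ne v 0 with rfl | hv
  · simp [gaussianPDFReal]
  have hv' : (0 : ℝ) < v := by positivity
  simp only [gaussianPDFReal, NNReal.coe_mul, NNReal.coe_div, NNReal.coe_ofNat, sub_zero]
  simp only [mul_mul_mul_comm _ (rexp _), ← exp_add]
  rw [← mul_inv, ← mul_inv, ← sqrt_mul (by positivity), ← sqrt_mul (by positivity)]
  congr 2
  · rw [show 2 * π * v * (2 * π * v) = (2 * π * v) ^ 2 by ring,
      show 2 * π * (2 * v) * (2 * π * (v / 2)) = (2 * π * v) ^ 2 by ring]
  · field_simp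
    ring

theorem inv_sqrt_mul_gaussianPDFReal_div_sqrt {v : ℝ≥0} (hv : v ≠ 0) (s : ℝ) :
    (√v)⁻¹ * gaussianPDFReal 0 1 (s / √v) = gaussianPDFReal 0 v s := by
  have hv' : (0 : ℝ) < v := by positivity
  simp only [gaussianPDFReal, NNReal.coe_one, mul_one, sub_zero]
  rw [← mul_assoc, ← mul_inv, mul_comm √(v : ℝ), ← sqrt_mul' _ hv'.le, div_pow,
    sq_sqrt hv'.le]
  congr 2
  ring_nf

theorem ofReal_inv_sqrt_two_mul_gaussianPDFReal_div_sqrt_two_mul_cdf (s a : ℝ) :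
    ENNReal.ofReal ((√2)⁻¹ * gaussianPDFReal 0 1 (s / √2) * cdf (gaussianReal 0 1) a)
      = gaussianPDF 0 2 s * gaussianReal 0 1 (Iic a) := by
  have hpdf := inv_sqrt_mul_gaussianPDFReal_div_sqrt (v := 2) two_ne_zero s
  rw [NNReal.coe_ofNat] at hpdf
  rw [hpdf, ENNReal.ofReal_mul (gaussianPDFReal_nonneg _ _ _), ofReal_cdf]
  rfl

theorem cdf_gaussianReal_eq_integral (μ : ℝ) {v : ℝ≥0} (hv : v ≠ 0) (x : ℝ) :
    cdf (gaussianReal μ v) x = ∫ y in Iic x, gaussianPDFReal μ v y := by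
  rw [cdf_eq_real, measureReal_def, gaussianReal_apply_eq_integral μ hv,
    ENNReal.toReal_ofReal (setIntegral_nonneg measurableSet_Iic
      fun y _ ↦ gaussianPDFReal_nonneg μ v y)]

theorem gaussianReal_prod_gaussianReal_apply {v : ℝ≥0} (hv : v ≠ 0) {E : Set (ℝ × ℝ)}
    (hE : MeasurableSet E) :
    ((gaussianReal 0 v).prod (gaussianReal 0 v)) E
      = ∫⁻ s, gaussianPDF 0 (2 * v) s
          * gaussianReal (s / 2) (v / 2) {x | (x, x - s) ∈ E} := by
  rw [gaussianReal_of_var_ne_zero 0 hv, withDensity_prod_withDensity_apply_eq_lintegral_sub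
    (measurable_gaussianPDF _ _) (measurable_gaussianPDF _ _) hE]
  refine lintegral_congr fun s ↦ ?_
  rw [gaussianReal_apply _ (div_ne_zero hv two_ne_zero), ← lintegral_const_mul _
    (measurable_gaussianPDF _ _)]
  congr! 2 with x
  simp only [gaussianPDF, ← ENNReal.ofReal_mul (gaussianPDFReal_nonneg _ _ _),
    gaussianPDFReal_mul_gaussianPDFReal_sub]

theorem gaussianReal_Ici (μ : ℝ) {v : ℝ≥0} (hv : v ≠ 0) (a : ℝ) :
    gaussianReal μ v (Ici a) = gaussianReal 0 1 (Iic ((μ - a) / √v)) := by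
  have hsqrt : 0 < √(v : ℝ) := sqrt_pos.2 (by positivity)
  have hmap : gaussianReal μ v = (gaussianReal 0 1).map (fun x ↦ μ - √v * x) := by
    rw [show (fun x ↦ μ - √v * x) = (μ - ·) ∘ (√v * ·) from rfl, ← Measure.map_map
      (measurable_const_sub μ) (measurable_const_mul _), gaussianReal_map_const_mul,
      gaussianReal_map_const_sub]
    congr
    · simp
    · ext; simp [sq_sqrt]
  rw [hmap, Measure.map_apply (by fun_prop) measurableSet_Ici]
  congr 1
  ext x
  simp only [mem_preimage, mem_Ici, mem_Iic, le_div_iff₀ hsqrt]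
  constructor <;> intro h <;> linarith

theorem gaussianReal_Ici_mean (μ : ℝ) {v : ℝ≥0} (hv : v ≠ 0) :
    gaussianReal μ v (Ici μ) = 2⁻¹ := by
  have hsymm : gaussianReal 0 1 (Ici 0) = gaussianReal 0 1 (Iic 0) := by
    simpa using gaussianReal_Ici 0 one_ne_zero 0
  have := nullSingletonClass_gaussianReal (μ := 0) one_ne_zero
  have hsum : gaussianReal 0 1 (Iic 0) + gaussianReal 0 1 (Ici 0) = 1 := by
    rw [← measure_congr Ioi_ae_eq_Ici, ← compl_Iic, measure_add_measure_compl measurableSet_Iic,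
      measure_univ]
  rw [gaussianReal_Ici μ hv, sub_self, zero_div]
  rw [hsymm, ← two_mul, mul_comm] at hsum
  exact ENNReal.eq_inv_of_mul_eq_one_left hsum

theorem measurableSet_sub_mem_and_add_mul_nonneg (k : ℝ) {T : Set ℝ} (hT : MeasurableSet T) :
    MeasurableSet {z : ℝ × ℝ | z.1 - z.2 ∈ T ∧ 0 ≤ z.1 + k * z.2} :=
  (hT.preimage (measurable_fst.sub measurable_snd)).inter
    (measurableSet_le measurable_const (measurable_fst.add (measurable_snd.const_mul k)))

theorem gaussianReal_prod_gaussianReal_sub_mem_and_add_mul_nonneg {k : ℝ} (hk : -1 < k)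
    {T : Set ℝ} (hT : MeasurableSet T) :
    ((gaussianReal 0 1).prod (gaussianReal 0 1)) {z | z.1 - z.2 ∈ T ∧ 0 ≤ z.1 + k * z.2}
      = ∫⁻ s in T, gaussianPDF 0 2 s
          * gaussianReal 0 1 (Iic ((1 - k) / (1 + k) * s / √2)) := by
  have hk' : 0 < 1 + k := by linarith
  rw [gaussianReal_prod_gaussianReal_apply one_ne_zero
    (measurableSet_sub_mem_and_add_mul_nonneg k hT), ← lintegral_indicator hT]
  set E := {z : ℝ × ℝ | z.1 - z.2 ∈ T ∧ 0 ≤ z.1 + k * z.2}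
  refine lintegral_congr fun s ↦ ?_
  by_cases hs : s ∈ T
  · have hfiber : {x | (x, x - s) ∈ E} = Ici (k * s / (1 + k)) := by
      ext x
      simp only [E, mem_ofPred_eq, sub_sub_cancel, hs, true_and, mem_Ici, div_le_iff₀ hk']
      constructor <;> intro h <;> linarith
    have hquantile :
        (s / 2 - k * s / (1 + k)) / √(2⁻¹ : ℝ≥0) = (1 - k) / (1 + k) * s / √2 := by
      simp only [NNReal.coe_inv, NNReal.coe_ofNat, sqrt_inv]
      field_simp
      linear_combination (s - s * k) * sq_sqrt (zero_le_two : (0 : ℝ) ≤ 2)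
    rw [indicator_of_mem hs, hfiber, mul_one, one_div, gaussianReal_Ici _ (by norm_num),
      hquantile]
  · have hfiber : {x | (x, x - s) ∈ E} = ∅ := by
      ext x
      simp [E, hs]
    rw [indicator_of_notMem hs, hfiber, measure_empty, mul_zero]

section IndependentStandardGaussians

variable {Ω : Type*} [MeasurableSpace Ω] {P : Measure Ω} {X Y : Ω → ℝ}

theorem measure_sub_mem_and_add_mul_nonneg [IsFiniteMeasure P] (hX : Measurable X)
    (hY : Measurable Y) (hindep : IndepFun X Y P) (hXlaw : P.map X = gaussianReal 0 1)
    (hYlaw : P.map Y = gaussianReal 0 1) {k : ℝ} (hk : -1 < k) {T : Set ℝ}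
    (hT : MeasurableSet T) :
    P {ω | X ω - Y ω ∈ T ∧ 0 ≤ X ω + k * Y ω}
      = ∫⁻ s in T, gaussianPDF 0 2 s
          * gaussianReal 0 1 (Iic ((1 - k) / (1 + k) * s / √2)) := by
  have hmap : P.map (fun ω ↦ (X ω, Y ω)) = (gaussianReal 0 1).prod (gaussianReal 0 1) := by
    rw [(indepFun_iff_map_prod_eq_prod_map_map hX.aemeasurable hY.aemeasurable).1 hindep,
      hXlaw, hYlaw]
  rw [← gaussianReal_prod_gaussianReal_sub_mem_and_add_mul_nonneg hk hT, ← hmap,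
    Measure.map_apply (hX.prodMk hY) (measurableSet_sub_mem_and_add_mul_nonneg k hT)]
  rfl

theorem measure_add_mul_nonneg_eq_half (hX : Measurable X) (hY : Measurable Y)
    (hindep : IndepFun X Y P) (hXlaw : P.map X = gaussianReal 0 1)
    (hYlaw : P.map Y = gaussianReal 0 1) (k : ℝ) :
    P {ω | 0 ≤ X ω + k * Y ω} = 2⁻¹ := by
  have hkY : P.map ((k * ·) ∘ Y) = gaussianReal 0 (.mk (k ^ 2) (sq_nonneg k) * 1) := by
    rw [← Measure.map_map (measurable_const_mul k) hY, hYlaw, gaussianReal_map_const_mul,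
      mul_zero]
  have hsum := gaussianReal_add_gaussianReal_of_indepFun
    (hindep.comp measurable_id (measurable_const_mul k)) hXlaw hkY
  rw [add_zero] at hsum
  calc P {ω | 0 ≤ X ω + k * Y ω}
      = P.map (id ∘ X + (k * ·) ∘ Y) (Ici 0) :=
        (Measure.map_apply (hX.add (hY.const_mul k)) measurableSet_Ici).symm
    _ = 2⁻¹ := by
        rw [hsum]
        exact gaussianReal_Ici_mean 0 (by positivity)

end IndependentStandardGaussians

theorem stmt_17 {Ω : Type*} [MeasurableSpace Ω] (P : Measure Ω) [IsProbabilityMeasure P]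
    (k : ℝ) (hk : k ∈ Set.Icc (0 : ℝ) 1)
    (X Y : Ω → ℝ) (hX : Measurable X) (hY : Measurable Y)
    (hindep : IndepFun X Y P)
    (hXlaw : P.map X = gaussianReal 0 1) (hYlaw : P.map Y = gaussianReal 0 1)
    (C : Ω → ℕ) (hC : C = fun ω => if 0 ≤ X ω + k * Y ω then 1 else 0)
    (φ : ℝ → ℝ) (hφ : φ = fun y => (Real.sqrt (2 * Real.pi))⁻¹ * Real.exp (-(y ^ 2) / 2))
    (Φ : ℝ → ℝ) (hΦ : Φ = fun x => ∫ y in Set.Iic x, φ y)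
    (α : ℝ) (hα : α = (1 - k) / (1 + k)) :
    (∀ t : ℝ, (P {ω | X ω - Y ω ≤ t ∧ C ω = 1}).toReal
        = ∫ s in Set.Iic t,
            (Real.sqrt 2)⁻¹ * φ (s / Real.sqrt 2) * Φ (α * s / Real.sqrt 2)) ∧
      (ProbabilityTheory.cond P {ω | C ω = 1}).map (fun ω => X ω - Y ω)
        = volume.withDensity
            (fun s => ENNReal.ofReal
              (2 * (Real.sqrt 2)⁻¹ * φ (s / Real.sqrt 2) * Φ (α * s / Real.sqrt 2))) := by
  obtain rfl : φ = gaussianPDFReal 0 1 := hφ.trans (by ext; simp [gaussianPDFReal])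
  obtain rfl : Φ = cdf (gaussianReal 0 1) :=
    hΦ.trans (funext fun x ↦ (cdf_gaussianReal_eq_integral 0 one_ne_zero x).symm)
  subst hα
  have hC1 : ∀ ω, C ω = 1 ↔ 0 ≤ X ω + k * Y ω := fun ω ↦ by simp [hC]
  have hCm : MeasurableSet {ω | C ω = 1} := by
    simp_rw [hC1]
    exact measurableSet_le measurable_const (hX.add (hY.const_mul k))
  set f : ℝ → ℝ := fun s ↦ (√2)⁻¹ * gaussianPDFReal 0 1 (s / √2)
    * cdf (gaussianReal 0 1) ((1 - k) / (1 + k) * s / √2)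
  have hf_nonneg : ∀ s, 0 ≤ f s := fun s ↦
    mul_nonneg (mul_nonneg (by positivity) (gaussianPDFReal_nonneg _ _ _)) (cdf_nonneg _ _)
  have hf_meas : Measurable f := by
    have := (monotone_cdf (gaussianReal 0 1)).measurable
    fun_prop
  have hevent (T : Set ℝ) (hT : MeasurableSet T) :
      P {ω | X ω - Y ω ∈ T ∧ C ω = 1} = ∫⁻ s in T, ENNReal.ofReal (f s) := by
    simpa [hC1, f, ofReal_inv_sqrt_two_mul_gaussianPDFReal_div_sqrt_two_mul_cdf] using
      measure_sub_mem_and_add_mul_nonneg hX hY hindep hXlaw hYlaw (by linarith [hk.1]) hT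
  refine ⟨fun t ↦ ?_, ?_⟩
  · rw [integral_eq_lintegral_of_nonneg_ae (ae_of_all _ hf_nonneg) hf_meas.aestronglyMeasurable,
      ← hevent (Iic t) measurableSet_Iic]
    rfl
  · have hhalf : P {ω | C ω = 1} = 2⁻¹ := by
      simpa [hC1] using measure_add_mul_nonneg_eq_half hX hY hindep hXlaw hYlaw k
    rw [map_cond_eq_withDensity hCm (Z := fun ω ↦ X ω - Y ω) (hX.sub hY)
      hf_meas.ennreal_ofReal hevent, hhalf, inv_inv]
    congr with s
    rw [← ENNReal.ofReal_ofNat 2, ← ENNReal.ofReal_mul zero_le_two]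
    simp only [f, mul_assoc]
end
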